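/- arXiv:1112.3981 — 2 statements merged into one kernel-verified Lean document; each statement's English description precedes it below -/
import Mathlib

section
/- Let A = [[0,−1],[1,0]], B = [[0,−1],[1,1]], and C = [[0,1],[1,0]] in GL(2,ℤ). Then GL(2,ℤ) has exactly seven conjugacy classes of elements of finite order: every element of GL(2,ℤ) of finite order is conjugate in GL(2,ℤ) to exactly one of I, −I, CA, C, B², A, B, these representatives having orders 1, 2, 2, 2, 3, 4, 6 respectively. -/
/-- `A = [[0,-1],[1,0]]` as an element of `GL(2,ℤ)`. -/
def matA : Matrix.GeneralLinearGroup (Fin 2) ℤ :=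
  ⟨!![0, -1; 1, 0], !![0, 1; -1, 0], by decide, by decide⟩

/-- `B = [[0,-1],[1,1]]` as an element of `GL(2,ℤ)`. -/
def matB : Matrix.GeneralLinearGroup (Fin 2) ℤ :=
  ⟨!![0, -1; 1, 1], !![1, 1; -1, 0], by decide, by decide⟩

/-- `C = [[0,1],[1,0]]` as an element of `GL(2,ℤ)`. -/
def matC : Matrix.GeneralLinearGroup (Fin 2) ℤ :=
  ⟨!![0, 1; 1, 0], !![0, 1; 1, 0], by decide, by decide⟩

/-!
By Cayley–Hamilton, a matrix `M ∈ SL(2,ℤ)` with trace `t` satisfies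
`M ^ (n + 1) = Sₙ(t) • M - Sₙ₋₁(t) • 1` with `Sₙ` the Chebyshev polynomials; for `|t| ≥ 2` the
values `|Sₙ(t)|` increase strictly, so `M ^ (n + 1) = 1` forces `M` to be scalar, i.e. `±1`.
Applied to `M` and to `M ^ 2`, this shows that an element of finite order other than `±1` has
`det = 1, |tr| ≤ 1` or `det = -1, tr = 0`; in both cases the discriminant `tr² - 4 det` has
absolute value at most `4`. For such matrices, conjugating by a shear and by the swap `C`
replaces the lower left entry `c` by one of absolute value `< |c|`, until `c ∈ {0, 1}`. A matrix
with lower left entry `1` is conjugate to the companion matrix of its characteristic polynomial,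
and a triangular matrix of determinant `-1` is conjugate to `CA` or to one with lower left entry
`1`. The seven representatives are told apart by trace and determinant, except `CA` and `C`,
which differ modulo `2`.
-/

open Matrix Polynomial Polynomial.Chebyshev

theorem Units.isConj_val_iff {M : Type*} [Monoid M] {u v : Mˣ} :
    IsConj (u : M) v ↔ IsConj u v := by
  rw [isConj_iff]
  constructor
  · rintro ⟨c, hc⟩
    exact ⟨c, Units.ext (by rw [Units.val_mul, Units.val_mul, hc.eq, Units.mul_inv_cancel_right])⟩
  · rintro ⟨c, rfl⟩
    exact ⟨c, by simp [SemiconjBy, mul_assoc]⟩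

theorem Int.exists_two_mul_abs_sub_mul_le (x : ℤ) {m : ℤ} (hm : m ≠ 0) :
    ∃ q : ℤ, 2 * |x - q * m| ≤ |m| := by
  have hpos : 0 < m.natAbs := Int.natAbs_pos.mpr hm
  refine ⟨x.bdiv m.natAbs * m.sign, ?_⟩
  have hr : x - x.bdiv m.natAbs * m.sign * m = x.bmod m.natAbs := by
    rw [Int.bmod_eq_self_sub_bdiv_mul, mul_assoc, Int.sign_mul_self_eq_natAbs]
  have := Int.le_bmod (x := x) hpos
  have := Int.bmod_le (x := x) hpos
  rw [hr, Int.abs_eq_natAbs m]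
  rcases abs_cases (x.bmod m.natAbs) with ⟨h, -⟩ | ⟨h, -⟩ <;> omega

theorem pow_succ_eq_S_eval_smul_sub {R : Type*} [Ring R] {x : R} {t : ℤ}
    (hx : x ^ 2 = t • x - 1) (n : ℕ) :
    x ^ (n + 1) = (S ℤ n).eval t • x - (S ℤ (n - 1 : ℤ)).eval t • 1 := by
  induction n with
  | zero => simp
  | succ n ih =>
    rw [pow_succ, ih, sub_mul, smul_mul_assoc, ← sq, hx, smul_mul_assoc, one_mul]
    push_cast
    rw [S_add_one, add_sub_cancel_right]
    simp only [eval_sub, eval_mul, eval_X]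
    module

theorem abs_S_eval_sub_one_lt {R : Type*} [CommRing R] [LinearOrder R] [IsStrictOrderedRing R]
    {t : R} (ht : 2 ≤ |t|) (n : ℕ) : |(S R (n - 1 : ℤ)).eval t| < |(S R n).eval t| := by
  induction n with
  | zero => simp
  | succ n ih =>
    push_cast
    rw [add_sub_cancel_right, S_add_one]
    simp only [eval_sub, eval_mul, eval_X]
    have := abs_sub_abs_le_abs_sub (t * (S R n).eval t) ((S R (n - 1 : ℤ)).eval t)
    rw [abs_mul] at this
    nlinarith [abs_nonneg ((S R n).eval t)]

namespace Matrix

theorem sq_eq_trace_smul_sub_det_smul {R : Type*} [CommRing R] (M : Matrix (Fin 2) (Fin 2) R) :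
    M ^ 2 = M.trace • M - M.det • 1 := by
  nontriviality R
  have h := M.aeval_self_charpoly
  rw [charpoly_fin_two] at h
  simp only [map_add, map_sub, map_pow, map_mul, aeval_X, Polynomial.aeval_C,
    Algebra.algebraMap_eq_smul_one, smul_mul_assoc, one_mul] at h
  rw [← sub_eq_zero, ← h]
  abel

section IsConj

variable {n R : Type*} [Fintype n] [DecidableEq n] [CommRing R]

theorem IsConj.trace_eq {M N : Matrix n n R} (h : IsConj M N) : M.trace = N.trace := by
  obtain ⟨c, hc⟩ := h
  rw [← Units.mul_inv_cancel_right N c, ← hc.eq, trace_units_conj]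

theorem IsConj.det_eq {M N : Matrix n n R} (h : IsConj M N) : M.det = N.det := by
  obtain ⟨c, hc⟩ := h
  rw [← Units.mul_inv_cancel_right N c, ← hc.eq, det_units_conj]

theorem IsConj.discr_eq {M N : Matrix (Fin 2) (Fin 2) R} (h : IsConj M N) :
    M.discr = N.discr := by
  rw [discr_fin_two, discr_fin_two, h.trace_eq, h.det_eq]

end IsConj

theorem eq_one_or_eq_neg_one_of_pow_eq_one {M : Matrix (Fin 2) (Fin 2) ℤ} {n : ℕ}
    (hdet : M.det = 1) (htr : 2 ≤ |M.trace|) (hM : M ^ (n + 1) = 1) : M = 1 ∨ M = -1 := by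
  have hsq : M ^ 2 = M.trace • M - 1 := by rw [sq_eq_trace_smul_sub_det_smul, hdet, one_smul]
  have hs : (S ℤ n).eval M.trace ≠ 0 :=
    abs_pos.mp ((abs_nonneg _).trans_lt (abs_S_eval_sub_one_lt htr n))
  rw [pow_succ_eq_S_eval_smul_sub hsq] at hM
  have entry (i j : Fin 2) := congrFun (congrFun hM i) j
  simp only [sub_apply, smul_apply, smul_eq_mul] at entry
  have h01 : M 0 1 = 0 := by simpa [one_apply, hs] using entry 0 1
  have h10 : M 1 0 = 0 := by simpa [one_apply, hs] using entry 1 0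
  have h11 : M 1 1 = M 0 0 := by
    simpa [sub_eq_zero, hs] using congrArg₂ (· - ·) (entry 1 1) (entry 0 0)
  have hdiag : M 0 0 * M 0 0 = 1 := by
    rwa [det_fin_two, h01, h10, h11, mul_zero, sub_zero] at hdet
  rcases Int.eq_one_or_neg_one_of_mul_eq_one hdiag with h | h
  · left; rw [eta_fin_two M, h01, h10, h11, h, one_fin_two]
  · right; rw [eta_fin_two M, h01, h10, h11, h]; ext i j; fin_cases i <;> fin_cases j <;> rfl

theorem eq_one_or_eq_neg_one_of_isOfFinOrder {M : Matrix (Fin 2) (Fin 2) ℤ}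
    (hM : IsOfFinOrder M) (hdet : M.det = 1) (htr : 2 ≤ |M.trace|) : M = 1 ∨ M = -1 := by
  obtain ⟨n, hn, hpow⟩ := hM.exists_pow_eq_one
  obtain ⟨n, rfl⟩ := Nat.exists_eq_add_one_of_ne_zero hn.ne'
  exact eq_one_or_eq_neg_one_of_pow_eq_one hdet htr hpow

theorem trace_eq_zero_of_isOfFinOrder {M : Matrix (Fin 2) (Fin 2) ℤ} (hM : IsOfFinOrder M)
    (hdet : M.det = -1) : M.trace = 0 := by
  have htr : (M ^ 2).trace = M.trace ^ 2 + 2 := by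
    rw [sq_eq_trace_smul_sub_det_smul, hdet, trace_sub, trace_smul, trace_smul, trace_one,
      Fintype.card_fin, smul_eq_mul, smul_eq_mul]
    push_cast
    ring
  have hdet2 : (M ^ 2).det = 1 := by rw [det_pow, hdet]; norm_num
  rcases eq_one_or_eq_neg_one_of_isOfFinOrder hM.pow hdet2
      (by rw [htr, abs_of_nonneg (by positivity)]; nlinarith [sq_nonneg M.trace]) with h | h
  · rw [h, trace_one, Fintype.card_fin, Nat.cast_ofNat] at htr
    exact pow_eq_zero_iff two_ne_zero |>.mp (by linarith)
  · rw [h, trace_neg, trace_one, Fintype.card_fin, Nat.cast_ofNat] at htr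
    nlinarith [sq_nonneg M.trace]

theorem isConj_shear (n a b c d : ℤ) :
    IsConj !![a, b; c, d] !![a + n * c, b + n * (d - a) - n ^ 2 * c; c, d - n * c] :=
  ⟨⟨!![1, n; 0, 1], !![1, -n; 0, 1], by simp [one_fin_two], by simp [one_fin_two]⟩, by
    simp only [SemiconjBy, mul_fin_two]; ring_nf⟩

theorem isConj_swap (a b c d : ℤ) : IsConj !![a, b; c, d] !![d, c; b, a] :=
  ⟨⟨!![0, 1; 1, 0], !![0, 1; 1, 0], by simp [one_fin_two], by simp [one_fin_two]⟩, by
    simp [SemiconjBy]⟩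

theorem isConj_neg_offDiag (a b c d : ℤ) : IsConj !![a, b; c, d] !![a, -b; -c, d] :=
  ⟨⟨!![1, 0; 0, -1], !![1, 0; 0, -1], by simp [one_fin_two], by simp [one_fin_two]⟩, by
    simp [SemiconjBy]⟩

theorem isConj_companion_of_lowerLeft_eq_one {M : Matrix (Fin 2) (Fin 2) ℤ} (hM : M 1 0 = 1) :
    IsConj M !![0, -M.det; 1, M.trace] := by
  obtain ⟨a, b, c, d, rfl⟩ : ∃ a b c d, M = !![a, b; c, d] := ⟨_, _, _, _, eta_fin_two M⟩
  obtain rfl : c = 1 := hM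
  convert isConj_shear (-a) a b 1 d using 2
  simp only [det_fin_two_of, trace_fin_two_of]
  ring_nf

theorem isConj_of_lowerLeft_eq_one {M N : Matrix (Fin 2) (Fin 2) ℤ} (hM : M 1 0 = 1)
    (hN : N 1 0 = 1) (htr : M.trace = N.trace) (hdet : M.det = N.det) : IsConj M N := by
  have hN' := isConj_companion_of_lowerLeft_eq_one hN
  rw [← htr, ← hdet] at hN'
  exact (isConj_companion_of_lowerLeft_eq_one hM).trans hN'.symm

theorem exists_isConj_lowerLeft_eq_zero_or_one (M : Matrix (Fin 2) (Fin 2) ℤ)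
    (hM : |M.discr| ≤ 4) : ∃ N, IsConj M N ∧ (N 1 0 = 0 ∨ N 1 0 = 1) := by
  induction hk : (M 1 0).natAbs using Nat.strong_induction_on generalizing M with
  | _ k ih =>
  obtain ⟨a, b, c, d, rfl⟩ : ∃ a b c d, M = !![a, b; c, d] := ⟨_, _, _, _, eta_fin_two M⟩
  change c.natAbs = k at hk
  rw [discr_fin_two, trace_fin_two_of, det_fin_two_of] at hM
  rcases (by omega : c = 0 ∨ c = 1 ∨ c = -1 ∨ 2 ≤ c.natAbs) with hc | hc | hc | hc
  · exact ⟨_, IsConj.refl _, Or.inl hc⟩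
  · exact ⟨_, IsConj.refl _, Or.inr hc⟩
  · exact ⟨_, isConj_neg_offDiag a b c d, Or.inr (by simp [hc])⟩
  obtain ⟨q, hq⟩ := Int.exists_two_mul_abs_sub_mul_le (a - d) (m := 2 * c) (by omega)
  have hconj := (isConj_shear (-q) a b c d).trans (isConj_swap _ _ _ _)
  set b' := b + -q * (d - a) - (-q) ^ 2 * c
  -- For the diagonal difference `u` after the shear, `4 b' c = disc - u ^ 2` and `u ^ 2 ≤ c ^ 2`
  -- by the choice of `q`, so `|4 b' c| ≤ 4 + c ^ 2 < 4 c ^ 2`.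
  have hb' : b'.natAbs < c.natAbs := by
    have hu : (a - d - q * (2 * c)) ^ 2 ≤ c ^ 2 := by
      rw [abs_mul, abs_two] at hq
      exact sq_le_sq.mpr (by linarith)
    have hD : 4 * (b' * c) = (a + d) ^ 2 - 4 * (a * d - b * c) - (a - d - q * (2 * c)) ^ 2 := by
      ring
    have hc2 : 4 ≤ c ^ 2 := by
      rcases (by omega : 2 ≤ c ∨ c ≤ -2) with h | h <;> nlinarith
    rw [abs_le] at hM
    have hbc : (4 * (b' * c)) ^ 2 ≤ (4 + c ^ 2) ^ 2 :=
      sq_le_sq' (by nlinarith [sq_nonneg (a - d - q * (2 * c))]) (by nlinarith)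
    rw [Int.natAbs_lt_iff_sq_lt]
    by_contra! h
    nlinarith [mul_le_mul_of_nonneg_left h (sq_nonneg c)]
  obtain ⟨N, hN, hN'⟩ := ih b'.natAbs (by omega) _ (by rwa [← hconj.discr_eq, discr_fin_two,
    trace_fin_two_of, det_fin_two_of]) rfl
  exact ⟨N, hconj.trans hN, hN'⟩

theorem isConj_diag_or_exists_lowerLeft_eq_one {M : Matrix (Fin 2) (Fin 2) ℤ} (hc : M 1 0 = 0)
    (hdet : M.det = -1) : IsConj M !![1, 0; 0, -1] ∨ ∃ N, IsConj M N ∧ N 1 0 = 1 := by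
  obtain ⟨a, b, c, d, rfl⟩ : ∃ a b c d, M = !![a, b; c, d] := ⟨_, _, _, _, eta_fin_two M⟩
  obtain rfl : c = 0 := hc
  rw [det_fin_two_of, mul_zero, sub_zero] at hdet
  obtain ⟨j, hj⟩ := Int.even_or_odd' b
  have hshear (r : ℤ) (hr : b = 2 * j + r) : IsConj !![a, b; 0, d] !![a, r; 0, d] := by
    have hb : b + a * j * (d - a) - (a * j) ^ 2 * 0 = r := by
      rcases Int.eq_one_or_neg_one_of_mul_eq_neg_one' hdet with ⟨rfl, rfl⟩ | ⟨rfl, rfl⟩ <;> linarith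
    have h := isConj_shear (a * j) a b 0 d
    rwa [hb, mul_zero, add_zero, sub_zero] at h
  rcases Int.eq_one_or_neg_one_of_mul_eq_neg_one' hdet with ⟨rfl, rfl⟩ | ⟨rfl, rfl⟩ <;>
    rcases hj with hj | hj
  · exact .inl (hshear 0 (by omega))
  · exact .inr ⟨_, (hshear 1 hj).trans (isConj_swap _ _ _ _), rfl⟩
  · exact .inl ((hshear 0 (by omega)).trans (isConj_swap _ _ _ _))
  · exact .inr ⟨_, (hshear 1 hj).trans (isConj_swap _ _ _ _), rfl⟩

end Matrix

def conjClassReps : List (GL (Fin 2) ℤ) := [1, -1, matC * matA, matC, matB ^ 2, matA, matB]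

theorem exists_mem_conjClassReps_isConj_of_det_eq_one {M : GL (Fin 2) ℤ}
    (hdet : M.val.det = 1) (htr : |M.val.trace| < 2) :
    ∃ r ∈ conjClassReps, IsConj r.val M.val := by
  have hdiscr : M.val.discr < 0 := by
    rw [discr_fin_two, hdet]; nlinarith [abs_lt.mp htr]
  obtain ⟨N, hMN, hN⟩ := exists_isConj_lowerLeft_eq_zero_or_one M.val (by
    rw [abs_le]; constructor <;> nlinarith [discr_fin_two M.val, sq_nonneg M.val.trace])
  have hN1 : N 1 0 = 1 := hN.resolve_left fun hc => by
    rw [hMN.discr_eq, discr_fin_two, trace_fin_two, det_fin_two, hc] at hdiscr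
    nlinarith [sq_nonneg (N 0 0 - N 1 1)]
  have hrep (r : GL (Fin 2) ℤ) (hr : r.val 1 0 = 1) (htr : r.val.trace = M.val.trace)
      (hdet' : r.val.det = 1) : IsConj r.val M.val :=
    (isConj_of_lowerLeft_eq_one hr hN1 (by rw [htr, hMN.trace_eq])
      (by rw [hdet', ← hMN.det_eq, hdet])).trans hMN.symm
  rcases (by rw [abs_lt] at htr; omega : M.val.trace = -1 ∨ M.val.trace = 0 ∨ M.val.trace = 1)
    with h | h | h
  · exact ⟨matB ^ 2, by simp [conjClassReps], hrep _ (by decide) (by rw [h]; decide) (by decide)⟩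
  · exact ⟨matA, by simp [conjClassReps], hrep _ (by decide) (by rw [h]; decide) (by decide)⟩
  · exact ⟨matB, by simp [conjClassReps], hrep _ (by decide) (by rw [h]; decide) (by decide)⟩

theorem exists_mem_conjClassReps_isConj_of_det_eq_neg_one {M : GL (Fin 2) ℤ}
    (hdet : M.val.det = -1) (htr : M.val.trace = 0) :
    ∃ r ∈ conjClassReps, IsConj r.val M.val := by
  have hC {N : Matrix (Fin 2) (Fin 2) ℤ} (hMN : IsConj M.val N) (hN : N 1 0 = 1) :
      IsConj matC.val M.val :=
    (isConj_of_lowerLeft_eq_one (by decide) hN (by rw [← hMN.trace_eq, htr]; decide)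
      (by rw [← hMN.det_eq, hdet]; decide)).trans hMN.symm
  obtain ⟨N, hMN, hN | hN⟩ := exists_isConj_lowerLeft_eq_zero_or_one M.val (by
    rw [discr_fin_two, htr, hdet]; norm_num)
  · rcases isConj_diag_or_exists_lowerLeft_eq_one hN (by rw [← hMN.det_eq, hdet]) with
      h | ⟨N', hNN', hN'⟩
    · refine ⟨matC * matA, by simp [conjClassReps], ?_⟩
      rw [show (matC * matA).val = !![1, 0; 0, -1] by decide]
      exact (hMN.trans h).symm
    · exact ⟨matC, by simp [conjClassReps], hC (hMN.trans hNN') hN'⟩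
  · exact ⟨matC, by simp [conjClassReps], hC hMN hN⟩

theorem exists_mem_conjClassReps_isConj {M : GL (Fin 2) ℤ} (hM : IsOfFinOrder M) :
    ∃ r ∈ conjClassReps, IsConj r M := by
  simp_rw [← Units.isConj_val_iff]
  have hM' : IsOfFinOrder M.val := Units.isOfFinOrder_val.mpr hM
  rcases Int.isUnit_iff.mp (isUnits_det_units M) with hdet | hdet
  · by_cases htr : 2 ≤ |M.val.trace|
    · rcases eq_one_or_eq_neg_one_of_isOfFinOrder hM' hdet htr with h | h
      · exact ⟨1, by simp [conjClassReps], by rw [h, Units.val_one]⟩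
      · exact ⟨-1, by simp [conjClassReps], by rw [h, Units.val_neg, Units.val_one]⟩
    · exact exists_mem_conjClassReps_isConj_of_det_eq_one hdet (not_le.mp htr)
  · exact exists_mem_conjClassReps_isConj_of_det_eq_neg_one hdet
      (trace_eq_zero_of_isOfFinOrder hM' hdet)

theorem not_isConj_matC_mul_matA_matC : ¬IsConj (matC * matA) matC := by
  intro h
  have h2 := (GeneralLinearGroup.map (Int.castRingHom (ZMod 2))).map_isConj h
  rw [show GeneralLinearGroup.map (Int.castRingHom (ZMod 2)) (matC * matA) = 1 by decide,
    isConj_one_right] at h2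
  exact absurd h2 (by decide)

theorem pairwise_not_isConj_conjClassReps : conjClassReps.Pairwise (fun r s => ¬IsConj r s) := by
  have htr {r s : GL (Fin 2) ℤ} (h : r.val.trace ≠ s.val.trace) : ¬IsConj r s :=
    fun hrs => h (Units.isConj_val_iff.mpr hrs).trace_eq
  have hdet {r s : GL (Fin 2) ℤ} (h : r.val.det ≠ s.val.det) : ¬IsConj r s :=
    fun hrs => h (Units.isConj_val_iff.mpr hrs).det_eq
  simp only [conjClassReps, List.pairwise_cons, List.mem_cons, List.not_mem_nil, or_false,
    forall_eq_or_imp, forall_eq, List.Pairwise.nil, and_true, false_imp_iff, implies_true]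
  refine ⟨⟨?_, ?_, ?_, ?_, ?_, ?_⟩, ⟨?_, ?_, ?_, ?_, ?_⟩, ⟨not_isConj_matC_mul_matA_matC, ?_, ?_, ?_⟩,
    ⟨?_, ?_, ?_⟩, ⟨?_, ?_⟩, ?_⟩
  all_goals first | (apply htr; decide) | (apply hdet; decide)

theorem eq_of_isConj_of_mem_conjClassReps {r s : GL (Fin 2) ℤ} (hr : r ∈ conjClassReps)
    (hs : s ∈ conjClassReps) (h : IsConj r s) : r = s := by
  have : Std.Symm fun r s : GL (Fin 2) ℤ => ¬IsConj r s := ⟨fun _ _ h h' => h h'.symm⟩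
  by_contra hne
  exact pairwise_not_isConj_conjClassReps.forall hr hs hne h

theorem orderOf_matA : orderOf matA = 4 := by
  rw [orderOf_eq_iff four_pos]
  refine ⟨by decide, fun m hm hm0 => ?_⟩
  interval_cases m <;> decide

theorem orderOf_matB : orderOf matB = 6 := by
  rw [orderOf_eq_iff (by norm_num)]
  refine ⟨by decide, fun m hm hm0 => ?_⟩
  interval_cases m <;> decide

/-- Lemma 51: `GL(2,ℤ)` has exactly seven conjugacy classes of elements of finite order,
represented by `I, -I, CA, C, B², A, B`, of orders `1, 2, 2, 2, 3, 4, 6` respectively. -/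
theorem stmt17 :
    (∀ M : Matrix.GeneralLinearGroup (Fin 2) ℤ, IsOfFinOrder M →
      ∃! r : Matrix.GeneralLinearGroup (Fin 2) ℤ,
        r ∈ ([1, -1, matC * matA, matC, matB ^ 2, matA, matB] :
          List (Matrix.GeneralLinearGroup (Fin 2) ℤ)) ∧ IsConj r M) ∧
    orderOf (1 : Matrix.GeneralLinearGroup (Fin 2) ℤ) = 1 ∧
    orderOf (-1 : Matrix.GeneralLinearGroup (Fin 2) ℤ) = 2 ∧
    orderOf (matC * matA) = 2 ∧
    orderOf matC = 2 ∧
    orderOf (matB ^ 2) = 3 ∧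
    orderOf matA = 4 ∧
    orderOf matB = 6 := by
  refine ⟨fun M hM => ?_, orderOf_one, orderOf_eq_prime (by decide) (by decide),
    orderOf_eq_prime (by decide) (by decide), orderOf_eq_prime (by decide) (by decide),
    orderOf_eq_prime (by decide) (by decide), orderOf_matA, orderOf_matB⟩
  obtain ⟨r, hr, hrM⟩ := exists_mem_conjClassReps_isConj hM
  exact ⟨r, ⟨hr, hrM⟩, fun s ⟨hs, hsM⟩ =>
    eq_of_isConj_of_mem_conjClassReps hs hr (hsM.trans hrM.symm)⟩
end

section
/- Let M be the subgroup of the group of affinities of ℝ² generated by the translations e₁+I and e₂+I (where e₁, e₂ is the standard basis) and the map −I : x ↦ −x. Then the normalizer of M in the group of affinities of ℝ² is exactly { (m/2)e₁ + (n/2)e₂ + A : m, n ∈ ℤ and A ∈ GL(2,ℤ) }. -/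
noncomputable section

abbrev Euc (n : ℕ) : Type := EuclideanSpace ℝ (Fin n)

abbrev AffG (n : ℕ) : Type := Euc n ≃ᵃ[ℝ] Euc n

/-- The translation `x ↦ a + x` as an affinity of `Eⁿ`. -/
def transl {n : ℕ} (a : Euc n) : AffG n := AffineEquiv.constVAdd ℝ (Euc n) a

/-- `Span(H)` : the linear span of the translation vectors of `H`. -/
def spanOf {n : ℕ} (H : Subgroup (AffG n)) : Submodule ℝ (Euc n) :=
  Submodule.span ℝ {a : Euc n | transl a ∈ H}

/-- An `n`-space group: a group of isometries acting properly discontinuously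
and cocompactly on `Eⁿ`. -/
def IsSpaceGroup {n : ℕ} (Γ : Subgroup (AffG n)) : Prop :=
  (∀ f ∈ Γ, Isometry (⇑f)) ∧
  (∀ K : Set (Euc n), IsCompact K →
    {γ : AffG n | γ ∈ Γ ∧ ((⇑γ '' K) ∩ K).Nonempty}.Finite) ∧
  (∃ K : Set (Euc n), IsCompact K ∧ ∀ x : Euc n, ∃ γ ∈ Γ, γ x ∈ K)

/-- `N` is a complete normal subgroup of `Γ`:  it is normal in `Γ` and
equals `{a+A ∈ Γ : a ∈ V ∧ V^⊥ ⊆ Fix A}` where `V = Span N`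
(for `f = a + A` we have `a = f 0` and `A = f.linear`). -/
def IsCompleteNormal {n : ℕ} (N Γ : Subgroup (AffG n)) : Prop :=
  N ≤ Γ ∧ (∀ γ ∈ Γ, ∀ ν ∈ N, γ * ν * γ⁻¹ ∈ N) ∧
  (∀ f : AffG n, f ∈ N ↔
    f ∈ Γ ∧ f 0 ∈ spanOf N ∧ ∀ x ∈ (spanOf N)ᗮ, f.linear x = x)

/-- Membership in the kernel `K = {b+B ∈ Γ : b ∈ V^⊥ ∧ V ⊆ Fix B}`
of the action of `Γ` on `V`. -/
def InKernel {n : ℕ} (Γ : Subgroup (AffG n)) (V : Submodule ℝ (Euc n)) (f : AffG n) : Prop :=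
  f ∈ Γ ∧ f 0 ∈ Vᗮ ∧ ∀ x ∈ V, f.linear x = x

end

/-!
The group `M` consists of the maps `x ↦ ±x + a` with `a ∈ ℤ²`. Conjugation by `f = c + A` sends
the translation by `v` to the translation by `A v`, and `-I` to `x ↦ 2c - x`; hence `f`
normalizes `M` exactly when `A` maps `ℤ²` onto itself and `2c ∈ ℤ²`. A linear map preserves `ℤⁿ`
in both directions iff its matrix is integral with determinant `±1`: the determinants of `A` and
`A⁻¹` are integers with product `1`, and conversely an integral matrix with unit determinant has
an integral inverse.
-/

theorem Subgroup.mem_normalizer_iff_conj_mem_and_inv_conj_mem {G : Type*} [Group G]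
    {H : Subgroup G} {g : G} :
    g ∈ normalizer (H : Set G) ↔ (∀ h ∈ H, g * h * g⁻¹ ∈ H) ∧ ∀ h ∈ H, g⁻¹ * h * g⁻¹⁻¹ ∈ H := by
  refine ⟨fun hg => ⟨fun h => (mem_normalizer_iff.1 hg h).1,
    fun h => (mem_normalizer_iff.1 (inv_mem hg) h).1⟩, fun ⟨h₁, h₂⟩ => ?_⟩
  refine mem_normalizer_iff.2 fun h => ⟨h₁ h, fun hh => ?_⟩
  simpa [mul_assoc] using h₂ _ hh

namespace AffineEquiv

variable {k V P : Type*} [Ring k] [AddCommGroup V] [Module k V] [AddTorsor V P]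

theorem conj_constVAdd (f : P ≃ᵃ[k] P) (v : V) :
    f * constVAdd k P v * f⁻¹ = constVAdd k P (f.linear v) := by
  ext x
  simp [map_vadd, inv_def]

section VectorSpace

variable (f : V ≃ᵃ[k] V)

theorem apply_eq_linear_add (x : V) : f x = f.linear x + f 0 :=
  congrFun (AffineMap.decomp f.toAffineMap) x

theorem forall_apply_eq_add_iff (c : V) (A : V ≃ₗ[k] V) :
    (∀ x, f x = c + A x) ↔ f.linear = A ∧ f 0 = c := by
  refine ⟨fun h => ?_, fun ⟨hA, h0⟩ x => by rw [apply_eq_linear_add, hA, h0, add_comm]⟩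
  have h0 : f 0 = c := by simpa using h 0
  refine ⟨LinearEquiv.ext fun x => ?_, h0⟩
  rw [← add_left_inj (f 0), ← apply_eq_linear_add, h, h0, add_comm]

theorem linear_apply_inv_apply (x : V) : f.linear (f⁻¹ x) = x - f 0 := by
  rw [eq_sub_iff_add_eq, ← apply_eq_linear_add]
  exact f.apply_symm_apply x

theorem inv_apply_zero : f⁻¹ 0 = -f.linear.symm (f 0) := by
  rw [eq_neg_iff_add_eq_zero, ← f.linear.symm_apply_apply (f⁻¹ 0), ← map_add,
    linear_apply_inv_apply, zero_sub, neg_add_cancel, map_zero]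

theorem conj_neg :
    f * (LinearEquiv.neg k).toAffineEquiv * f⁻¹ =
      constVAdd k V (2 • f 0) * (LinearEquiv.neg k).toAffineEquiv := by
  ext x
  change f (-f⁻¹ x) = 2 • f 0 + -x
  rw [apply_eq_linear_add, map_neg, linear_apply_inv_apply]
  abel

end VectorSpace

end AffineEquiv

open AffineEquiv

section SignedTranslations

variable {k V : Type*} [Ring k] [AddCommGroup V] [Module k V]

variable (k) in
def signedTranslations (L : AddSubgroup V) : Subgroup (V ≃ᵃ[k] V) where
  carrier := {f | f 0 ∈ L ∧ (f.linear = LinearEquiv.refl k V ∨ f.linear = LinearEquiv.neg k)}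
  one_mem' := ⟨L.zero_mem, Or.inl rfl⟩
  mul_mem' := by
    rintro f g ⟨hf, hf'⟩ ⟨hg, hg'⟩
    refine ⟨?_, ?_⟩
    · change f (g 0) ∈ L
      rw [apply_eq_linear_add]
      rcases hf' with h | h <;> rw [h] <;> simp [L.add_mem, L.neg_mem, hf, hg]
    · change g.linear.trans f.linear = _ ∨ g.linear.trans f.linear = _
      rcases hf' with h | h <;> rcases hg' with h' | h' <;> rw [h, h'] <;>
        simp [LinearEquiv.ext_iff]
  inv_mem' := by
    rintro f ⟨hf, hf'⟩
    refine ⟨?_, ?_⟩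
    · rw [inv_apply_zero]
      rcases hf' with h | h <;> rw [h] <;> simp [hf]
    · change f.linear.symm = _ ∨ f.linear.symm = _
      rcases hf' with h | h <;> rw [h] <;> simp [LinearEquiv.ext_iff]

variable {L : AddSubgroup V}

theorem constVAdd_mem_signedTranslations_iff {v : V} :
    constVAdd k V v ∈ signedTranslations k L ↔ v ∈ L :=
  ⟨fun h => by simpa using h.1, fun h => ⟨by simpa using h, Or.inl rfl⟩⟩

theorem neg_mem_signedTranslations :
    (LinearEquiv.neg k).toAffineEquiv ∈ signedTranslations k L :=
  ⟨by simp, Or.inr rfl⟩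

theorem eq_constVAdd_or_eq_constVAdd_mul_neg {f : V ≃ᵃ[k] V} (hf : f ∈ signedTranslations k L) :
    f = constVAdd k V (f 0) ∨ f = constVAdd k V (f 0) * (LinearEquiv.neg k).toAffineEquiv := by
  rcases hf.2 with h | h <;> [left; right] <;> ext x <;>
    simp [apply_eq_linear_add f x, h, add_comm]

theorem closure_constVAdd_image_union_neg (s : Set V) :
    Subgroup.closure (constVAdd k V '' s ∪ {(LinearEquiv.neg k).toAffineEquiv}) =
      signedTranslations k (AddSubgroup.closure s) := by
  set C := Subgroup.closure (constVAdd k V '' s ∪ {(LinearEquiv.neg k).toAffineEquiv})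
  apply le_antisymm
  · rw [Subgroup.closure_le]
    rintro _ (⟨v, hv, rfl⟩ | rfl)
    · exact constVAdd_mem_signedTranslations_iff.2 (AddSubgroup.subset_closure hv)
    · exact neg_mem_signedTranslations
  · have hC : AddSubgroup.closure s ≤ Subgroup.toAddSubgroup (C.comap (constVAddHom k V)) :=
      AddSubgroup.closure_le _ |>.2 fun v hv => Subgroup.subset_closure (Or.inl ⟨v, hv, rfl⟩)
    intro f hf
    have hf0 : constVAdd k V (f 0) ∈ C := hC hf.1
    rcases eq_constVAdd_or_eq_constVAdd_mul_neg hf with h | h <;> rw [h]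
    · exact hf0
    · exact mul_mem hf0 (Subgroup.subset_closure (Or.inr rfl))

theorem conj_mem_signedTranslations_iff (f : V ≃ᵃ[k] V) :
    (∀ g ∈ signedTranslations k L, f * g * f⁻¹ ∈ signedTranslations k L) ↔
      (∀ v ∈ L, f.linear v ∈ L) ∧ 2 • f 0 ∈ L := by
  constructor
  · intro h
    refine ⟨fun v hv => ?_, ?_⟩
    · have := h _ (constVAdd_mem_signedTranslations_iff.2 hv)
      rwa [conj_constVAdd, constVAdd_mem_signedTranslations_iff] at this
    · simpa [conj_neg] using (h _ neg_mem_signedTranslations).1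
  · rintro ⟨hlin, htwo⟩ g hg
    have hconj_transl : f * constVAdd k V (g 0) * f⁻¹ ∈ signedTranslations k L := by
      rw [conj_constVAdd, constVAdd_mem_signedTranslations_iff]
      exact hlin _ hg.1
    rcases eq_constVAdd_or_eq_constVAdd_mul_neg hg with h | h <;> rw [h]
    · exact hconj_transl
    · rw [show f * (constVAdd k V (g 0) * (LinearEquiv.neg k).toAffineEquiv) * f⁻¹ =
          (f * constVAdd k V (g 0) * f⁻¹) * (f * (LinearEquiv.neg k).toAffineEquiv * f⁻¹) by
          group, conj_neg]
      exact mul_mem hconj_transl (mul_mem (constVAdd_mem_signedTranslations_iff.2 htwo)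
        neg_mem_signedTranslations)

theorem mem_normalizer_signedTranslations_iff {f : V ≃ᵃ[k] V} :
    f ∈ Subgroup.normalizer (signedTranslations k L : Set (V ≃ᵃ[k] V)) ↔
      (∀ v, f.linear v ∈ L ↔ v ∈ L) ∧ 2 • f 0 ∈ L := by
  rw [Subgroup.mem_normalizer_iff_conj_mem_and_inv_conj_mem, conj_mem_signedTranslations_iff,
    conj_mem_signedTranslations_iff, inv_apply_zero, inv_def, linear_symm]
  constructor
  · rintro ⟨⟨hA, htwo⟩, hAsymm, -⟩
    exact ⟨fun v => ⟨fun h => by simpa using hAsymm _ h, hA v⟩, htwo⟩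
  · rintro ⟨hA, htwo⟩
    have hAsymm : ∀ v ∈ L, f.linear.symm v ∈ L := fun v hv => (hA _).1 (by simpa)
    refine ⟨⟨fun v => (hA v).2, htwo⟩, hAsymm, ?_⟩
    rw [smul_neg, ← map_nsmul]
    exact L.neg_mem (hAsymm _ htwo)

end SignedTranslations

section IntLattice

variable {ι : Type*} [Fintype ι] [DecidableEq ι]

variable (ι) in
def intLattice : AddSubgroup (EuclideanSpace ℝ ι) :=
  AddSubgroup.closure (Set.range fun i => EuclideanSpace.single i 1)

theorem mem_intLattice_iff {v : EuclideanSpace ℝ ι} :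
    v ∈ intLattice ι ↔ ∀ i, ∃ k : ℤ, v i = k := by
  have := (EuclideanSpace.basisFun ι ℝ).toBasis.mem_span_iff_repr_mem ℤ v
  simp only [OrthonormalBasis.coe_toBasis, OrthonormalBasis.coe_toBasis_repr_apply,
    EuclideanSpace.basisFun_repr, algebraMap_int_eq, eq_intCast, Set.mem_range] at this
  rw [intLattice, ← Submodule.span_int_eq_addSubgroupClosure, Submodule.mem_toAddSubgroup]
  simp_rw [← EuclideanSpace.basisFun_apply ι ℝ, this, eq_comm]

theorem mapsTo_intLattice_iff (A : EuclideanSpace ℝ ι →ₗ[ℝ] EuclideanSpace ℝ ι) :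
    (∀ v ∈ intLattice ι, A v ∈ intLattice ι) ↔
      ∀ i j, ∃ k : ℤ, A (EuclideanSpace.single j 1) i = k := by
  constructor
  · intro h i j
    exact mem_intLattice_iff.1 (h _ (AddSubgroup.subset_closure ⟨j, rfl⟩)) i
  · intro h
    suffices intLattice ι ≤ (intLattice ι).comap A.toAddMonoidHom from fun v hv => this hv
    rw [intLattice, AddSubgroup.closure_le]
    rintro _ ⟨j, rfl⟩
    exact mem_intLattice_iff.2 fun i => h i j

variable {B : Matrix ι ι ℤ}

theorem toMatrix_basisFun_eq_map_intCast {A : EuclideanSpace ℝ ι →ₗ[ℝ] EuclideanSpace ℝ ι}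
    (hB : ∀ i j, A (EuclideanSpace.single j 1) i = B i j) :
    LinearMap.toMatrix (EuclideanSpace.basisFun ι ℝ).toBasis (EuclideanSpace.basisFun ι ℝ).toBasis
      A = B.map (↑) :=
  Matrix.ext fun i j => by simp [LinearMap.toMatrix_apply, hB]

theorem det_eq_intCast_det {A : EuclideanSpace ℝ ι →ₗ[ℝ] EuclideanSpace ℝ ι}
    (hB : ∀ i j, A (EuclideanSpace.single j 1) i = B i j) :
    LinearMap.det A = B.det := by
  rw [← LinearMap.det_toMatrix (EuclideanSpace.basisFun ι ℝ).toBasis,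
    toMatrix_basisFun_eq_map_intCast hB, Int.cast_det]

theorem LinearEquiv.symm_apply_single_eq_inv {A : EuclideanSpace ℝ ι ≃ₗ[ℝ] EuclideanSpace ℝ ι}
    (hB : ∀ i j, A (EuclideanSpace.single j 1) i = B i j) (hdet : IsUnit B.det) (i j : ι) :
    A.symm (EuclideanSpace.single j 1) i = (B⁻¹ i j : ℤ) := by
  set b := (EuclideanSpace.basisFun ι ℝ).toBasis
  have hleft : LinearMap.toMatrix b b A.symm * LinearMap.toMatrix b b A = 1 := by
    rw [← LinearMap.toMatrix_mul, ← LinearMap.toMatrix_one b]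
    congr 1
    ext x
    simp
  have hright : LinearMap.toMatrix b b A * B⁻¹.map (↑) = 1 := by
    rw [toMatrix_basisFun_eq_map_intCast hB]
    have := Matrix.map_mul (L := B) (M := B⁻¹) (f := Int.castRingHom ℝ)
    rw [Matrix.mul_nonsing_inv B hdet] at this
    simpa using this.symm
  have hsymm : LinearMap.toMatrix b b A.symm = B⁻¹.map (↑) := left_inv_eq_right_inv hleft hright
  simpa [b, LinearMap.toMatrix_apply] using congrFun (congrFun hsymm i) j

theorem preserves_intLattice_iff (A : EuclideanSpace ℝ ι ≃ₗ[ℝ] EuclideanSpace ℝ ι) :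
    (∀ v, A v ∈ intLattice ι ↔ v ∈ intLattice ι) ↔
      (∀ i j, ∃ k : ℤ, A (EuclideanSpace.single j 1) i = k) ∧
        (LinearMap.det A.toLinearMap = 1 ∨ LinearMap.det A.toLinearMap = -1) := by
  constructor
  · intro hA
    have hint := (mapsTo_intLattice_iff A.toLinearMap).1 fun v => (hA v).2
    have hint' := (mapsTo_intLattice_iff A.symm.toLinearMap).1 fun v hv =>
      (hA _).1 (by simpa using hv)
    choose B hB using hint
    choose B' hB' using hint'
    have hmul : ((Matrix.det B * Matrix.det B' : ℤ) : ℝ) = 1 := by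
      rw [Int.cast_mul, ← det_eq_intCast_det hB, ← det_eq_intCast_det hB',
        LinearEquiv.det_mul_det_symm]
    refine ⟨fun i j => ⟨B i j, hB i j⟩, ?_⟩
    rw [det_eq_intCast_det hB]
    rcases Int.eq_one_or_neg_one_of_mul_eq_one (Int.cast_eq_one.1 hmul) with h | h <;>
      simp [h]
  · rintro ⟨hint, hdet⟩
    choose B hB using hint
    have hunit : IsUnit (Matrix.det B) := by
      rw [det_eq_intCast_det hB] at hdet
      rw [Int.isUnit_iff]
      rcases hdet with h | h <;> [left; right] <;> exact_mod_cast h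
    have hsymm := (mapsTo_intLattice_iff A.symm.toLinearMap).2 fun i j =>
      ⟨_, A.symm_apply_single_eq_inv hB hunit i j⟩
    intro v
    refine ⟨fun hv => by simpa using hsymm _ hv, fun hv => ?_⟩
    exact (mapsTo_intLattice_iff A.toLinearMap).2 (fun i j => ⟨_, hB i j⟩) v hv

end IntLattice

theorem two_smul_mem_intLattice_fin_two_iff (v : Euc 2) :
    2 • v ∈ intLattice (Fin 2) ↔ ∃ m n : ℤ,
      v = ((m : ℝ) / 2) • EuclideanSpace.single 0 1 + ((n : ℝ) / 2) • EuclideanSpace.single 1 1 := by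
  rw [mem_intLattice_iff, Fin.forall_fin_two]
  constructor
  · rintro ⟨⟨m, hm⟩, ⟨n, hn⟩⟩
    refine ⟨m, n, ?_⟩
    ext i
    fin_cases i <;> simp at hm hn ⊢ <;> linarith
  · rintro ⟨m, n, rfl⟩
    refine ⟨⟨m, ?_⟩, ⟨n, ?_⟩⟩ <;> simp [two_smul]

theorem closure_transl_single_neg_eq :
    Subgroup.closure ({transl (EuclideanSpace.single (0 : Fin 2) (1 : ℝ)),
      transl (EuclideanSpace.single (1 : Fin 2) (1 : ℝ)),
      (LinearEquiv.neg ℝ (M := Euc 2)).toAffineEquiv} : Set (AffG 2)) =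
      signedTranslations ℝ (intLattice (Fin 2)) := by
  rw [intLattice, ← closure_constVAdd_image_union_neg]
  congr 1
  ext f
  simp [transl, Fin.exists_fin_two]
  tauto

/-- Lemma 44 (normalizer computation): for `M = ⟨e₁+I, e₂+I, -I⟩` acting on `ℝ²`, the
normalizer of `M` in the group of affinities of `ℝ²` is
`{(m/2)e₁ + (n/2)e₂ + A : m, n ∈ ℤ, A ∈ GL(2,ℤ)}`. -/
theorem stmt18 :
    ∀ f : AffG 2,
      f ∈ Subgroup.normalizer ((Subgroup.closure
        ({transl (EuclideanSpace.single (0 : Fin 2) (1 : ℝ)),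
          transl (EuclideanSpace.single (1 : Fin 2) (1 : ℝ)),
          (LinearEquiv.neg ℝ (M := Euc 2)).toAffineEquiv} : Set (AffG 2))) : Set (AffG 2)) ↔
      ∃ (mz nz : ℤ) (A : Euc 2 ≃ₗ[ℝ] Euc 2),
        (∀ i j : Fin 2, ∃ k : ℤ, A (EuclideanSpace.single j (1 : ℝ)) i = (k : ℝ)) ∧
        (LinearMap.det A.toLinearMap = 1 ∨ LinearMap.det A.toLinearMap = -1) ∧
        (∀ x : Euc 2, f x = ((mz : ℝ) / 2) • EuclideanSpace.single (0 : Fin 2) (1 : ℝ) +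
          ((nz : ℝ) / 2) • EuclideanSpace.single (1 : Fin 2) (1 : ℝ) + A x) := by
  intro f
  rw [closure_transl_single_neg_eq, mem_normalizer_signedTranslations_iff, preserves_intLattice_iff,
    two_smul_mem_intLattice_fin_two_iff]
  constructor
  · rintro ⟨⟨hint, hdet⟩, m, n, h0⟩
    exact ⟨m, n, f.linear, hint, hdet, (f.forall_apply_eq_add_iff _ _).2 ⟨rfl, h0⟩⟩
  · rintro ⟨m, n, A, hint, hdet, hf⟩
    obtain ⟨rfl, h0⟩ := (f.forall_apply_eq_add_iff _ _).1 hf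
    exact ⟨⟨hint, hdet⟩, m, n, h0⟩
end
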